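/- arXiv:1811.04300 — 5 statements merged into one kernel-verified Lean document; each statement's English description precedes it below -/
import Mathlib

section
/- Let A be a live subproblem with u-chunk a and v-chunk b with respect to a clean edit-matching alignment T, meaning: |b| < 8|a| + 12, |a| < 2|b|, |a| > 0, and fewer than |a|/10 elements of a are unmatched by T to elements of b. Then at least 4/5 of the pivot options of A (the letters u_i of a with ⌈|a|/4⌉ ≤ i ≤ ⌈3|a|/4⌉, which comprise at least half of a) are valid pivots, i.e., each edit matches (under the comparison function f) with exactly one letter of b. -/
/-! A position of the `u`-chunk that `T` matches into the `v`-chunk is a valid pivot, because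
cleanness makes its partner the only letter it edit matches. So the invalid pivot options are
among the fewer than `|a|/10` unmatched positions, while the pivot options number at least `|a|/2`;
hence fewer than a fifth of them are invalid. -/

open Finset

/-- Since `(k + 3) / 4 = ⌈k / 4⌉`, these are the positions of `[a1, a2)` with 1-indexed relative
position between `⌈|a|/4⌉` and `⌈3|a|/4⌉`. -/
def pivotOptions (a1 a2 : ℕ) : Finset ℕ :=
  (Ico a1 a2).filter fun i =>
    (a2 - a1 + 3) / 4 ≤ i - a1 + 1 ∧ i - a1 + 1 ≤ (3 * (a2 - a1) + 3) / 4

theorem Icc_subset_pivotOptions {a1 a2 : ℕ} (h : a1 < a2) :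
    Icc (a1 + (a2 - a1 + 3) / 4 - 1) (a1 + (3 * (a2 - a1) + 3) / 4 - 1) ⊆ pivotOptions a1 a2 := by
  intro i hi
  simp only [mem_Icc] at hi
  simp only [pivotOptions, mem_filter, mem_Ico]
  omega

theorem le_two_mul_card_pivotOptions (a1 a2 : ℕ) : a2 - a1 ≤ 2 * #(pivotOptions a1 a2) := by
  rcases le_or_gt a2 a1 with h | h
  · omega
  have hcard := card_le_card (Icc_subset_pivotOptions h)
  rw [Nat.card_Icc] at hcard
  omega

theorem card_filter_edit_eq_one_of_mem {f : ℕ → ℕ → Bool} {T : Finset (ℕ × ℕ)}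
    (hedge : ∀ p ∈ T, f p.1 p.2 = true)
    (hunique : ∀ p ∈ T, ∀ j', f p.1 j' = true → j' = p.2)
    {s : Finset ℕ} {i j : ℕ} (hij : (i, j) ∈ T) (hj : j ∈ s) :
    #(s.filter fun j' => f i j' = true) = 1 :=
  card_eq_one.2 ⟨j, eq_singleton_iff_unique_mem.2
    ⟨mem_filter.2 ⟨hj, hedge _ hij⟩, fun j' hj' => hunique _ hij j' (mem_filter.1 hj').2⟩⟩

theorem card_le_card_filter_add_card {α : Type*} {s u : Finset α} {p : α → Prop}
    [DecidablePred p] (h : s.filter (fun a => ¬ p a) ⊆ u) :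
    #s ≤ #(s.filter p) + #u := by
  rw [← card_filter_add_card_filter_not (s := s) p]
  gcongr

theorem live_subproblem_valid_pivots_general
    (f : ℕ → ℕ → Bool) (T : Finset (ℕ × ℕ))
    (hedge : ∀ p ∈ T, f p.1 p.2 = true)
    (hclean : ∀ p ∈ T, (∀ i', f i' p.2 = true → i' = p.1) ∧
      (∀ j', f p.1 j' = true → j' = p.2))
    (a1 a2 b1 b2 : ℕ)
    (m : ℕ) (hm : m = a2 - a1)
    (hlive3 : 10 * ((Finset.Ico a1 a2).filter fun i =>
        ¬ ∃ j ∈ Finset.Ico b1 b2, (i, j) ∈ T).card < m) :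
    2 * ((Finset.Ico a1 a2).filter fun i =>
          (m + 3) / 4 ≤ i - a1 + 1 ∧ i - a1 + 1 ≤ (3 * m + 3) / 4).card ≥ m ∧
    (4 : ℝ) / 5 * ((Finset.Ico a1 a2).filter fun i =>
          (m + 3) / 4 ≤ i - a1 + 1 ∧ i - a1 + 1 ≤ (3 * m + 3) / 4).card ≤
      (((Finset.Ico a1 a2).filter fun i =>
          ((m + 3) / 4 ≤ i - a1 + 1 ∧ i - a1 + 1 ≤ (3 * m + 3) / 4) ∧
          ((Finset.Ico b1 b2).filter fun j => f i j = true).card = 1).card : ℝ) := by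
  subst hm
  set valid : ℕ → Prop := fun i => #((Ico b1 b2).filter fun j => f i j = true) = 1
  rw [← filter_filter
    (fun i => (a2 - a1 + 3) / 4 ≤ i - a1 + 1 ∧ i - a1 + 1 ≤ (3 * (a2 - a1) + 3) / 4) valid]
  change 2 * #(pivotOptions a1 a2) ≥ _ ∧
    (4 : ℝ) / 5 * #(pivotOptions a1 a2) ≤ #((pivotOptions a1 a2).filter valid)
  have hhalf := le_two_mul_card_pivotOptions a1 a2
  have hinvalid : (pivotOptions a1 a2).filter (fun i => ¬ valid i) ⊆
      (Ico a1 a2).filter fun i => ¬ ∃ j ∈ Ico b1 b2, (i, j) ∈ T := by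
    intro i hi
    simp only [pivotOptions, mem_filter] at hi ⊢
    refine ⟨hi.1.1, fun ⟨j, hj, hij⟩ => hi.2 ?_⟩
    exact card_filter_edit_eq_one_of_mem hedge (fun p hp => (hclean p hp).2) hij hj
  have hcount := card_le_card_filter_add_card hinvalid
  refine ⟨hhalf, ?_⟩
  rw [div_mul_eq_mul_div, div_le_iff₀ (by norm_num)]
  exact_mod_cast
    (by omega : 4 * #(pivotOptions a1 a2) ≤ #((pivotOptions a1 a2).filter valid) * 5)

/-- **Lemma (valid pivots in live subproblems).**
Let `f` be a comparison function on positions, `T` a clean edit-matching alignment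
(non-crossing matching using only pairs with `f = true`, where each matched letter is
the unique one edit matching its partner).  Consider a subproblem with `u`-chunk the
positions `[a1, a2)` and `v`-chunk the positions `[b1, b2)`, and suppose it is live:
`|b| < 8|a| + 12`, `|a| < 2|b|`, `|a| > 0`, and fewer than `|a|/10` positions of the
`u`-chunk are unmatched by `T` to positions of the `v`-chunk.  The pivot options are the
positions `i` of the `u`-chunk whose (1-indexed) relative position `r` satisfies
`⌈|a|/4⌉ ≤ r ≤ ⌈3|a|/4⌉`; they comprise at least half of the chunk, and at least
`4/5` of them are valid pivots, i.e. edit match with exactly one position of the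
`v`-chunk. -/
theorem live_subproblem_valid_pivots
    (f : ℕ → ℕ → Bool) (T : Finset (ℕ × ℕ))
    (hedge : ∀ p ∈ T, f p.1 p.2 = true)
    (hmatch : ∀ p ∈ T, ∀ q ∈ T, p ≠ q → p.1 ≠ q.1 ∧ p.2 ≠ q.2)
    (hcross : ∀ p ∈ T, ∀ q ∈ T, p.1 < q.1 → p.2 < q.2)
    (hclean : ∀ p ∈ T, (∀ i', f i' p.2 = true → i' = p.1) ∧
      (∀ j', f p.1 j' = true → j' = p.2))
    (a1 a2 b1 b2 : ℕ)
    (m : ℕ) (hm : m = a2 - a1) (hmpos : 0 < m)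
    (hlive1 : b2 - b1 < 8 * m + 12)
    (hlive2 : m < 2 * (b2 - b1))
    (hlive3 : 10 * ((Finset.Ico a1 a2).filter fun i =>
        ¬ ∃ j ∈ Finset.Ico b1 b2, (i, j) ∈ T).card < m) :
    2 * ((Finset.Ico a1 a2).filter fun i =>
          (m + 3) / 4 ≤ i - a1 + 1 ∧ i - a1 + 1 ≤ (3 * m + 3) / 4).card ≥ m ∧
    (4 : ℝ) / 5 * ((Finset.Ico a1 a2).filter fun i =>
          (m + 3) / 4 ≤ i - a1 + 1 ∧ i - a1 + 1 ≤ (3 * m + 3) / 4).card ≤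
      (((Finset.Ico a1 a2).filter fun i =>
          ((m + 3) / 4 ≤ i - a1 + 1 ∧ i - a1 + 1 ≤ (3 * m + 3) / 4) ∧
          ((Finset.Ico b1 b2).filter fun j => f i j = true).card = 1).card : ℝ) :=
  live_subproblem_valid_pivots_general f T hedge hclean a1 a2 b1 b2 m hm hlive3
end

section
/- Let T be a non-crossing matching between positions of u and v with position map φ. Suppose a subproblem splits at pivot position i in u matched to position j in v, producing child subproblems on (u_1…u_{i−1}, v_1…v_{j−1}) and (u_{i+1}…u_{|u|}, v_{j+1}…v_{|v|}). Then the number of edges of T that lie in the parent subproblem but in neither child — i.e., edges (u_r, v_s) with r ≠ i that are cut — is at most |φ(i) − j| + 1. (Every cut edge (u_r, v_s) has s between min(j, φ(i)) and max(j, φ(i)) inclusive.) -/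
open scoped Classical

/-- The position map of a matching `T` between (1-indexed) positions:
`phi T l = k` if `(l, k) ∈ T`, otherwise `phi T l = phi T (l-1)`, with
`phi T l = 1` when no earlier matched position exists. -/
noncomputable def phi (T : Finset (ℕ × ℕ)) : ℕ → ℕ
  | 0 => 1
  | l + 1 => if h : ∃ k, (l + 1, k) ∈ T then h.choose else phi T l

/-!
Read off the recursion, `φ(i)` is `1` or the `v`-position of the last edge `(r, s)` with `r ≤ i`.
Since `T` is monotone, every edge left of `i` ends at or below `φ(i)` and every edge right of `i`
ends at or above it. A cut edge left of `i` does not end below `j`, and one right of `i` does not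
end above `j`, so all cut edges end in the interval between `j` and `φ(i)`; as no two edges of a
matching share an endpoint in `v`, there are at most `|φ(i) - j| + 1` of them.
-/

theorem phi_succ_mem_or (T : Finset (ℕ × ℕ)) (l : ℕ) :
    (l + 1, phi T (l + 1)) ∈ T ∨ ((∀ k, (l + 1, k) ∉ T) ∧ phi T (l + 1) = phi T l) := by
  by_cases h : ∃ k, (l + 1, k) ∈ T
  · left
    rw [phi, dif_pos h]
    exact h.choose_spec
  · right
    exact ⟨fun k hk => h ⟨k, hk⟩, by rw [phi, dif_neg h]⟩

theorem phi_eq_one_or_mem (T : Finset (ℕ × ℕ)) (l : ℕ) :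
    phi T l = 1 ∨ ∃ r ≤ l, (r, phi T l) ∈ T := by
  induction l with
  | zero => exact .inl rfl
  | succ l ih =>
    rcases phi_succ_mem_or T l with hmem | ⟨-, hstep⟩
    · exact .inr ⟨l + 1, le_rfl, hmem⟩
    · rw [hstep]
      exact ih.imp_right fun ⟨r, hr, hmem⟩ => ⟨r, hr.trans l.le_succ, hmem⟩

section Monotone

variable {T : Finset (ℕ × ℕ)}

theorem snd_le_snd_of_fst_le
    (hmatch : ∀ p ∈ T, ∀ q ∈ T, p ≠ q → p.1 ≠ q.1 ∧ p.2 ≠ q.2)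
    (hcross : ∀ p ∈ T, ∀ q ∈ T, p.1 < q.1 → p.2 < q.2) :
    ∀ p ∈ T, ∀ q ∈ T, p.1 ≤ q.1 → p.2 ≤ q.2 := by
  intro p hp q hq hpq
  rcases hpq.lt_or_eq with hlt | heq
  · exact (hcross p hp q hq hlt).le
  · by_cases hne : p = q
    · rw [hne]
    · exact absurd heq (hmatch p hp q hq hne).1

theorem phi_le_of_mem (hpos : ∀ p ∈ T, 1 ≤ p.2)
    (hcross : ∀ p ∈ T, ∀ q ∈ T, p.1 < q.1 → p.2 < q.2) {l r s : ℕ} (hrs : (r, s) ∈ T)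
    (hlr : l < r) : phi T l ≤ s := by
  rcases phi_eq_one_or_mem T l with hone | ⟨r', hr', hmem⟩
  · exact hone ▸ hpos _ hrs
  · exact (hcross _ hmem _ hrs (by omega)).le

theorem le_phi_of_mem (hpos : ∀ p ∈ T, 1 ≤ p.1)
    (hmono : ∀ p ∈ T, ∀ q ∈ T, p.1 ≤ q.1 → p.2 ≤ q.2) {l r s : ℕ} (hrs : (r, s) ∈ T)
    (hrl : r ≤ l) : s ≤ phi T l := by
  induction l with
  | zero =>
    have : 1 ≤ r := hpos _ hrs
    omega
  | succ l ih =>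
    rcases phi_succ_mem_or T l with hmem | ⟨hnot, hstep⟩
    · exact hmono _ hrs _ hmem hrl
    · rw [hstep]
      refine ih (Nat.lt_succ_iff.1 (lt_of_le_of_ne hrl ?_))
      rintro rfl
      exact hnot s hrs

end Monotone

theorem cut_edges_bound_general (T : Finset (ℕ × ℕ))
    (hpos : ∀ p ∈ T, 1 ≤ p.1 ∧ 1 ≤ p.2)
    (hmatch : ∀ p ∈ T, ∀ q ∈ T, p ≠ q → p.1 ≠ q.1 ∧ p.2 ≠ q.2)
    (hcross : ∀ p ∈ T, ∀ q ∈ T, p.1 < q.1 → p.2 < q.2)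
    (i j : ℕ) :
    (∀ e ∈ T.filter fun e : ℕ × ℕ =>
        e.1 ≠ i ∧ ¬(e.1 < i ∧ e.2 < j) ∧ ¬(i < e.1 ∧ j < e.2),
      min j (phi T i) ≤ e.2 ∧ e.2 ≤ max j (phi T i)) ∧
    (T.filter fun e : ℕ × ℕ =>
        e.1 ≠ i ∧ ¬(e.1 < i ∧ e.2 < j) ∧ ¬(i < e.1 ∧ j < e.2)).card ≤
      ((phi T i : ℤ) - (j : ℤ)).natAbs + 1 := by
  have hmono := snd_le_snd_of_fst_le hmatch hcross
  have hbetween : ∀ e ∈ T.filter fun e : ℕ × ℕ =>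
      e.1 ≠ i ∧ ¬(e.1 < i ∧ e.2 < j) ∧ ¬(i < e.1 ∧ j < e.2),
      min j (phi T i) ≤ e.2 ∧ e.2 ≤ max j (phi T i) := by
    rintro ⟨r, s⟩ he
    obtain ⟨hrs, hri, hleft, hright⟩ := Finset.mem_filter.1 he
    rcases Nat.lt_or_gt_of_ne hri with hlt | hgt
    · have := le_phi_of_mem (fun p hp => (hpos p hp).1) hmono hrs hlt.le
      omega
    · have := phi_le_of_mem (fun p hp => (hpos p hp).2) hcross hrs hgt
      omega
  refine ⟨hbetween, ?_⟩
  calc _ ≤ (Finset.Icc (min j (phi T i)) (max j (phi T i))).card := by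
        refine Finset.card_le_card_of_injOn Prod.snd
          (fun e he => Finset.mem_Icc.2 (hbetween e he)) fun p hp q hq hpq => ?_
        by_contra hne
        exact (hmatch p (Finset.mem_filter.1 hp).1 q (Finset.mem_filter.1 hq).1 hne).2 hpq
    _ = ((phi T i : ℤ) - (j : ℤ)).natAbs + 1 := by
        rw [Nat.card_Icc]
        omega

/-- **Cut edges at a pivot split.**  If a subproblem splits at pivot position `i` of `u`
matched to position `j` of `v`, then every edge `(r, s) ∈ T` with `r ≠ i` that is cut
(contained in neither region `{r < i, s < j}` nor `{r > i, s > j}`) has `s` between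
`min(j, φ(i))` and `max(j, φ(i))` inclusive, and the number of such cut edges is at
most `|φ(i) − j| + 1`. -/
theorem cut_edges_bound (T : Finset (ℕ × ℕ))
    (hpos : ∀ p ∈ T, 1 ≤ p.1 ∧ 1 ≤ p.2)
    (hmatch : ∀ p ∈ T, ∀ q ∈ T, p ≠ q → p.1 ≠ q.1 ∧ p.2 ≠ q.2)
    (hcross : ∀ p ∈ T, ∀ q ∈ T, p.1 < q.1 → p.2 < q.2)
    (i j : ℕ) (hi : 1 ≤ i) (hj : 1 ≤ j) :
    (∀ e ∈ T.filter fun e : ℕ × ℕ =>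
        e.1 ≠ i ∧ ¬(e.1 < i ∧ e.2 < j) ∧ ¬(i < e.1 ∧ j < e.2),
      min j (phi T i) ≤ e.2 ∧ e.2 ≤ max j (phi T i)) ∧
    (T.filter fun e : ℕ × ℕ =>
        e.1 ≠ i ∧ ¬(e.1 < i ∧ e.2 < j) ∧ ¬(i < e.1 ∧ j < e.2)).card ≤
      ((phi T i : ℤ) - (j : ℤ)).natAbs + 1 :=
  cut_edges_bound_general T hpos hmatch hcross i j
end

section
/- Consider strings a and b and a comparison function f, with cost of an edit-matching alignment A defined as (number of letters of a unmatched by A) plus (number of indices i such that b_i, b_{i+1}, …, b_{i+6} are all unmatched by A). If |b| ≥ 8|a| + 12, then every edit-matching alignment between a and b has cost at least |a|. (In particular, the number of matched edges is at most |a|, each edge blocks at most 7 of the length-7 windows of b, and b has at least 8|a| windows, so at least |a| windows are edge-free.) -/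
/-!
Every matched position of `b` lies in at most 7 of the length-7 windows, and a matching has at
most `|a|` edges, so at most `7|a|` of the `|b| - 6 ≥ 8|a|` windows of `b` are hit: at least `|a|`
windows are edge-free, and the `b`-portion cost alone already reaches `|a|`.
-/

/-- The `a`-portion cost of an alignment `A` between strings of lengths `la` and `lb`
(positions 0-indexed): the number of positions of `a` unmatched by `A`. -/
def aCost (la : ℕ) (A : Finset (ℕ × ℕ)) : ℕ :=
  ((Finset.range la).filter fun i => ∀ p ∈ A, p.1 ≠ i).card

/-- The `b`-portion cost: the number of length-7 windows of `b` (sets of 7 consecutive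
positions) all of whose positions are unmatched by `A`. -/
def bCost (lb : ℕ) (A : Finset (ℕ × ℕ)) : ℕ :=
  ((Finset.range (lb - 6)).filter fun i => ∀ t ∈ Finset.range 7, ∀ p ∈ A, p.2 ≠ i + t).card

open Finset

theorem sub_mul_card_le_card_free_windows {ι : Type*} (n k : ℕ) (A : Finset ι) (g : ι → ℕ) :
    n - k * #A ≤ #((range n).filter fun i => ∀ t ∈ range k, ∀ p ∈ A, g p ≠ i + t) := by
  set free : ℕ → Prop := fun i => ∀ t ∈ range k, ∀ p ∈ A, g p ≠ i + t
  have hit_subset : (range n).filter (fun i => ¬ free i) ⊆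
      A.biUnion fun p => (range k).image fun t => g p - t := by
    intro i hi
    simp only [free, mem_filter, not_forall, not_not] at hi
    obtain ⟨-, t, ht, p, hp, hpt⟩ := hi
    exact mem_biUnion.2 ⟨p, hp, mem_image.2 ⟨t, ht, by omega⟩⟩
  have hit_card : #((range n).filter fun i => ¬ free i) ≤ k * #A := by
    calc _ ≤ #(A.biUnion fun p => (range k).image fun t => g p - t) := card_le_card hit_subset
      _ ≤ #A * k := card_biUnion_le_card_mul _ _ _ fun p _ => card_image_le.trans (card_range k).le
      _ = k * #A := Nat.mul_comm _ _
  have hsplit := card_filter_add_card_filter_not (s := range n) free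
  rw [card_range] at hsplit
  change n - k * #A ≤ #((range n).filter free)
  omega

theorem long_b_cost_lower_bound_general (la lb : ℕ) (f : ℕ → ℕ → Bool) (A : Finset (ℕ × ℕ))
    (hvalid : ∀ p ∈ A, p.1 < la ∧ p.2 < lb ∧ f p.1 p.2 = true)
    (hmatch : ∀ p ∈ A, ∀ q ∈ A, p ≠ q → p.1 ≠ q.1 ∧ p.2 ≠ q.2)
    (h : 8 * la + 12 ≤ lb) :
    la ≤ aCost la A + bCost lb A := by
  have hA : #A ≤ la := by
    simpa using card_le_card_of_injOn (t := range la) Prod.fst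
      (fun p hp => mem_range.2 (hvalid p hp).1)
      (fun p hp q hq hpq => by_contra fun hne => (hmatch p hp q hq hne).1 hpq)
  have hb := sub_mul_card_le_card_free_windows (lb - 6) 7 A Prod.snd
  have : la ≤ bCost lb A := by unfold bCost; omega
  omega

/-- If `|b| ≥ 8|a| + 12`, then every edit-matching alignment between `a` and `b`
has cost at least `|a|`. -/
theorem long_b_cost_lower_bound (la lb : ℕ) (f : ℕ → ℕ → Bool) (A : Finset (ℕ × ℕ))
    (hvalid : ∀ p ∈ A, p.1 < la ∧ p.2 < lb ∧ f p.1 p.2 = true)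
    (hmatch : ∀ p ∈ A, ∀ q ∈ A, p ≠ q → p.1 ≠ q.1 ∧ p.2 ≠ q.2)
    (hcross : ∀ p ∈ A, ∀ q ∈ A, p.1 < q.1 → p.2 < q.2)
    (h : 8 * la + 12 ≤ lb) :
    la ≤ aCost la A + bCost lb A :=
  long_b_cost_lower_bound_general la lb f A hvalid hmatch h
end

section
/- Suppose a subproblem has u-chunk a and v-chunk b where at least |a|/10 of the positions of a are not matched by T to positions of b, or |a| ≥ 2|b|, or |b| ≥ 8|a| + 12 (i.e., the subproblem is dead). Then the induced cost of the subproblem (the cost of T restricted to a and b) is at least |a|/10 whenever |a| > 0, except in the case |a| = 0 where the surplus cost is 0. Consequently, the surplus cost (the number of edges of T between a and b absent from the algorithm's output) is at most 10 times the induced cost. -/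
open Finset

section Matching

variable {α β : Type*} {E : Finset (α × β)}

theorem injOn_fst_of_matching (hmatch : ∀ p ∈ E, ∀ q ∈ E, p ≠ q → p.1 ≠ q.1 ∧ p.2 ≠ q.2) :
    Set.InjOn Prod.fst (E : Set (α × β)) := fun p hp q hq h =>
  by_contra fun hne => (hmatch p hp q hq hne).1 h

theorem injOn_snd_of_matching (hmatch : ∀ p ∈ E, ∀ q ∈ E, p ≠ q → p.1 ≠ q.1 ∧ p.2 ≠ q.2) :
    Set.InjOn Prod.snd (E : Set (α × β)) := fun p hp q hq h =>
  by_contra fun hne => (hmatch p hp q hq hne).2 h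

end Matching

theorem card_le_of_injOn_of_lt {α : Type*} {E : Finset α} {f : α → ℕ} {n : ℕ}
    (hlt : ∀ p ∈ E, f p < n) (hinj : Set.InjOn f (E : Set α)) : E.card ≤ n := by
  simpa using card_le_card_of_injOn f (fun p hp => mem_range.2 (hlt p hp)) hinj

theorem le_aCost_add_card (la : ℕ) (E : Finset (ℕ × ℕ)) : la ≤ aCost la E + E.card := by
  classical
  have hcover : range la ⊆ ((range la).filter fun i => ∀ p ∈ E, p.1 ≠ i) ∪ E.image Prod.fst := by
    intro i hi
    by_cases hfree : ∀ p ∈ E, p.1 ≠ i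
    · exact mem_union_left _ (mem_filter.2 ⟨hi, hfree⟩)
    · push Not at hfree
      obtain ⟨p, hp, rfl⟩ := hfree
      exact mem_union_right _ (mem_image_of_mem _ hp)
  calc la = (range la).card := (card_range la).symm
    _ ≤ _ := card_le_card hcover
    _ ≤ _ := card_union_le _ _
    _ ≤ aCost la E + E.card := Nat.add_le_add_left card_image_le _

theorem sub_six_le_bCost_add_seven_mul_card (lb : ℕ) (E : Finset (ℕ × ℕ)) :
    lb - 6 ≤ bCost lb E + 7 * E.card := by
  classical
  set hits : Finset ℕ := E.biUnion fun p => (range 7).image (p.2 - ·)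
  have hcover : range (lb - 6) ⊆
      ((range (lb - 6)).filter fun i => ∀ t ∈ range 7, ∀ p ∈ E, p.2 ≠ i + t) ∪ hits := by
    intro i hi
    by_cases hfree : ∀ t ∈ range 7, ∀ p ∈ E, p.2 ≠ i + t
    · exact mem_union_left _ (mem_filter.2 ⟨hi, hfree⟩)
    · push Not at hfree
      obtain ⟨t, ht, p, hp, hpt⟩ := hfree
      exact mem_union_right _ (mem_biUnion.2 ⟨p, hp, mem_image.2 ⟨t, ht, by omega⟩⟩)
  have hhits : hits.card ≤ E.card * 7 :=
    card_biUnion_le_card_mul _ _ _ fun p _ => card_image_le.trans (card_range 7).le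
  calc lb - 6 = (range (lb - 6)).card := (card_range _).symm
    _ ≤ _ := card_le_card hcover
    _ ≤ _ := card_union_le _ _
    _ ≤ bCost lb E + 7 * E.card := by rw [mul_comm]; exact Nat.add_le_add_left hhits _

theorem le_ten_mul_cost_of_dead {la lb : ℕ} {E : Finset (ℕ × ℕ)}
    (hvalid : ∀ p ∈ E, p.1 < la ∧ p.2 < lb)
    (hmatch : ∀ p ∈ E, ∀ q ∈ E, p ≠ q → p.1 ≠ q.1 ∧ p.2 ≠ q.2)
    (hdead : la ≤ 10 * aCost la E ∨ 2 * lb ≤ la ∨ 8 * la + 12 ≤ lb) :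
    la ≤ 10 * (aCost la E + bCost lb E) := by
  have hla : E.card ≤ la :=
    card_le_of_injOn_of_lt (fun p hp => (hvalid p hp).1) (injOn_fst_of_matching hmatch)
  have hlb : E.card ≤ lb :=
    card_le_of_injOn_of_lt (fun p hp => (hvalid p hp).2) (injOn_snd_of_matching hmatch)
  have ha := le_aCost_add_card la E
  have hb := sub_six_le_bCost_add_seven_mul_card lb E
  omega

theorem dead_subproblem_surplus_general (la lb : ℕ) (E Pi : Finset (ℕ × ℕ))
    (hvalid : ∀ p ∈ E, p.1 < la ∧ p.2 < lb)
    (hmatch : ∀ p ∈ E, ∀ q ∈ E, p ≠ q → p.1 ≠ q.1 ∧ p.2 ≠ q.2)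
    (hdead : la ≤ 10 * aCost la E ∨ 2 * lb ≤ la ∨ 8 * la + 12 ≤ lb) :
    (0 < la → la ≤ 10 * (aCost la E + bCost lb E)) ∧
    (la = 0 → (E \ Pi).card = 0) ∧
    (E \ Pi).card ≤ 10 * (aCost la E + bCost lb E) := by
  have hcost := le_ten_mul_cost_of_dead hvalid hmatch hdead
  have hsurplus : (E \ Pi).card ≤ la :=
    (card_le_card sdiff_subset).trans
      (card_le_of_injOn_of_lt (fun p hp => (hvalid p hp).1) (injOn_fst_of_matching hmatch))
  exact ⟨fun _ => hcost, fun h0 => Nat.le_zero.1 (h0 ▸ hsurplus), hsurplus.trans hcost⟩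

/-- **Dead subproblems.**  Consider a subproblem with `u`-chunk of length `la` and
`v`-chunk of length `lb`, and the set `E` of edges of the clean edit-matching
alignment `T` between the two chunks.  If the subproblem is dead — at least `la/10`
positions of the `u`-chunk are unmatched, or `la ≥ 2 lb`, or `lb ≥ 8 la + 12` — then
the induced cost `aCost + bCost` is at least `la/10` whenever `la > 0`; when `la = 0`
the surplus cost is `0`; and in all cases the surplus cost (edges of `E` missing from
the algorithm's output `Pi`) is at most `10` times the induced cost. -/
theorem dead_subproblem_surplus (la lb : ℕ) (E Pi : Finset (ℕ × ℕ))
    (hvalid : ∀ p ∈ E, p.1 < la ∧ p.2 < lb)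
    (hmatch : ∀ p ∈ E, ∀ q ∈ E, p ≠ q → p.1 ≠ q.1 ∧ p.2 ≠ q.2)
    (hcross : ∀ p ∈ E, ∀ q ∈ E, p.1 < q.1 → p.2 < q.2)
    (hdead : la ≤ 10 * aCost la E ∨ 2 * lb ≤ la ∨ 8 * la + 12 ≤ lb) :
    (0 < la → la ≤ 10 * (aCost la E + bCost lb E)) ∧
    (la = 0 → (E \ Pi).card = 0) ∧
    (E \ Pi).card ≤ 10 * (aCost la E + bCost lb E) :=
  dead_subproblem_surplus_general la lb E Pi hvalid hmatch hdead
end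

section
/- Let x ∈ Σ^n with n a multiple of 6B, broken into blocks x^1, …, x^{n/6B} of length 6B, and let y ∈ Σ^n be broken into blocks y^1, …, y^{n/3B} of length 3B. Suppose blocks x^i and x^j (i ≠ j) both partially edit match with the same block y^k: i.e., there exist 6B-letter substrings u, v of y, each containing y^k, with ed(x^i, u) ≤ pB/8 and ed(x^j, v) ≤ pB/8. Then neither x^i nor x^j is p-unique: each contains a B-letter substring that is within pB/2 edits of some B-letter substring of x disjoint from it. -/
/-- Costs for Levenshtein distance (Mathlib's former `Levenshtein.Cost`, removed since). -/
structure Levenshtein.Cost (α β δ : Type*) where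
  delete : α → δ
  insert : β → δ
  substitute : α → β → δ

/-- Mathlib's former `Levenshtein.defaultCost`. -/
def Levenshtein.defaultCost {α : Type*} [DecidableEq α] : Levenshtein.Cost α α ℕ where
  delete _ := 1
  insert _ := 1
  substitute a b := if a = b then 0 else 1

/-- Mathlib's former `levenshtein`, given by its characterizing recursion. -/
def levenshtein {α β δ : Type*} [AddZeroClass δ] [Min δ] (C : Levenshtein.Cost α β δ) :
    List α → List β → δ
  | [], [] => 0
  | [], y :: ys => C.insert y + levenshtein C [] ys
  | x :: xs, [] => C.delete x + levenshtein C xs []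
  | x :: xs, y :: ys => min (C.delete x + levenshtein C xs (y :: ys))
      (min (C.insert y + levenshtein C (x :: xs) ys) (C.substitute x y + levenshtein C xs ys))

/-- The edit distance between two strings. -/
def ed {α : Type*} [DecidableEq α] (u v : List α) : ℕ :=
  levenshtein Levenshtein.defaultCost u v

/-- The contiguous substring of `x` of length `B` starting at (0-indexed) position `s`. -/
def sub {α : Type*} (x : List α) (B s : ℕ) : List α := (x.drop s).take B

/-!
An optimal alignment of `x^i` with `u ⊇ y^k`, cut at the ends of `y^k`, exhibits a substring of
`x^i` within `pB/8` edits of `y^k`; likewise for `x^j`, so by the triangle inequality the two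
substrings are within `pB/4` edits of each other. Cutting the alignment once more after the first
`B` letters gives a `B`-letter substring `a` of `x^i` and a substring `c` of `x^j` with
`ed a c ≤ pB/4`. As `|c|` differs from `B` by at most `ed a c`, trimming `c` or extending it
inside `x^j` to exactly `B` letters costs at most another `ed a c`.
-/

section

variable {α : Type*} [DecidableEq α]

@[simp] theorem ed_nil_nil : ed ([] : List α) [] = 0 := by
  simp [ed, levenshtein]

theorem ed_nil_cons (y : α) (ys : List α) : ed [] (y :: ys) = ed [] ys + 1 := by
  simp [ed, levenshtein, Levenshtein.defaultCost, Nat.add_comm]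

theorem ed_cons_nil (x : α) (xs : List α) : ed (x :: xs) [] = ed xs [] + 1 := by
  simp [ed, levenshtein, Levenshtein.defaultCost, Nat.add_comm]

theorem ed_cons_cons (x y : α) (xs ys : List α) :
    ed (x :: xs) (y :: ys) =
      min (ed xs (y :: ys) + 1) (min (ed (x :: xs) ys + 1) (ed xs ys + if x = y then 0 else 1)) := by
  simp [ed, levenshtein, Levenshtein.defaultCost, Nat.add_comm]

inductive EditAlignment : List α → List α → ℕ → Prop
  | nil : EditAlignment [] [] 0
  | insert (y : α) {a b : List α} {k : ℕ} : EditAlignment a b k → EditAlignment a (y :: b) (k + 1)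
  | delete (x : α) {a b : List α} {k : ℕ} : EditAlignment a b k → EditAlignment (x :: a) b (k + 1)
  | substitute (x y : α) {a b : List α} {k : ℕ} :
      EditAlignment a b k → EditAlignment (x :: a) (y :: b) (k + if x = y then 0 else 1)

namespace EditAlignment

variable {a b c a' b' : List α} {k l : ℕ}

theorem ed_le (h : EditAlignment a b k) : ed a b ≤ k := by
  induction h with
  | nil => simp
  | @insert y a b k _ ih =>
    cases a with
    | nil => rw [ed_nil_cons]; omega
    | cons x xs => rw [ed_cons_cons]; omega
  | @delete x a b k _ ih =>
    cases b with
    | nil => rw [ed_cons_nil]; omega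
    | cons y ys => rw [ed_cons_cons]; omega
  | substitute x y _ ih => rw [ed_cons_cons]; omega

theorem symm (h : EditAlignment a b k) : EditAlignment b a k := by
  induction h with
  | nil => exact nil
  | insert y _ ih => exact delete y ih
  | delete x _ ih => exact insert x ih
  | substitute x y _ ih => simpa only [eq_comm] using substitute y x ih

theorem length_le (h : EditAlignment a b k) : b.length ≤ a.length + k := by
  induction h with
  | nil => simp
  | insert | delete | substitute => simp only [List.length_cons]; omega

theorem refl : ∀ a : List α, EditAlignment a a 0
  | [] => nil
  | x :: a => by simpa using substitute x x (refl a)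

theorem nil_left : ∀ b : List α, EditAlignment [] b b.length
  | [] => nil
  | y :: b => insert y (nil_left b)

theorem append (h : EditAlignment a b k) (h' : EditAlignment a' b' l) :
    EditAlignment (a ++ a') (b ++ b') (k + l) := by
  induction h with
  | nil => simpa using h'
  | insert y _ ih => simpa only [List.cons_append, Nat.add_right_comm] using insert y ih
  | delete x _ ih => simpa only [List.cons_append, Nat.add_right_comm] using delete x ih
  | substitute x y _ ih => simpa only [List.cons_append, Nat.add_right_comm] using substitute x y ih

theorem trans (h₁ : EditAlignment a b k) (h₂ : EditAlignment b c l) :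
    ∃ m ≤ k + l, EditAlignment a c m := by
  induction h₂ generalizing a k with
  | nil => exact ⟨k, by omega, h₁⟩
  | insert z _ ih =>
    obtain ⟨m, hm, h⟩ := ih h₁
    exact ⟨m + 1, by omega, insert z h⟩
  | @delete y b c l h₂ ih =>
    induction a generalizing k with
    | nil =>
      cases h₁ with
      | insert _ h₁ => obtain ⟨m, hm, h⟩ := ih h₁; exact ⟨m, by omega, h⟩
    | cons x a iha =>
      cases h₁ with
      | insert _ h₁ => obtain ⟨m, hm, h⟩ := ih h₁; exact ⟨m, by omega, h⟩
      | delete _ h₁ => obtain ⟨m, hm, h⟩ := iha h₁; exact ⟨m + 1, by omega, delete x h⟩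
      | substitute _ _ h₁ =>
        obtain ⟨m, hm, h⟩ := ih h₁
        have : (if x = y then 0 else 1) ≤ 1 := by split <;> omega
        exact ⟨m + 1, by omega, delete x h⟩
  | @substitute y z b c l h₂ ih =>
    induction a generalizing k with
    | nil =>
      cases h₁ with
      | insert _ h₁ => obtain ⟨m, hm, h⟩ := ih h₁; exact ⟨m + 1, by omega, insert z h⟩
    | cons x a iha =>
      cases h₁ with
      | insert _ h₁ => obtain ⟨m, hm, h⟩ := ih h₁; exact ⟨m + 1, by omega, insert z h⟩
      | delete _ h₁ => obtain ⟨m, hm, h⟩ := iha h₁; exact ⟨m + 1, by omega, delete x h⟩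
      | substitute _ _ h₁ =>
        obtain ⟨m, hm, h⟩ := ih h₁
        have : (if x = z then 0 else 1) ≤ (if x = y then 0 else 1) + (if y = z then 0 else 1) := by
          split_ifs <;> simp_all
        exact ⟨_, by omega, substitute x z h⟩

theorem split (h : EditAlignment a (b ++ b') k) :
    ∃ a₁ a₂ k₁ k₂, a = a₁ ++ a₂ ∧ k₁ + k₂ ≤ k ∧
      EditAlignment a₁ b k₁ ∧ EditAlignment a₂ b' k₂ := by
  induction b generalizing a k with
  | nil => exact ⟨[], a, 0, k, rfl, by omega, nil, h⟩
  | cons y b ih =>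
    induction a generalizing k with
    | nil =>
      cases h with
      | insert _ h =>
        obtain ⟨a₁, a₂, k₁, k₂, ha, hk, h₁, h₂⟩ := ih h
        exact ⟨a₁, a₂, k₁ + 1, k₂, ha, by omega, insert y h₁, h₂⟩
    | cons x a iha =>
      cases h with
      | insert _ h =>
        obtain ⟨a₁, a₂, k₁, k₂, ha, hk, h₁, h₂⟩ := ih h
        exact ⟨a₁, a₂, k₁ + 1, k₂, ha, by omega, insert y h₁, h₂⟩
      | delete _ h =>
        obtain ⟨a₁, a₂, k₁, k₂, rfl, hk, h₁, h₂⟩ := iha h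
        exact ⟨x :: a₁, a₂, k₁ + 1, k₂, rfl, by omega, delete x h₁, h₂⟩
      | substitute _ _ h =>
        obtain ⟨a₁, a₂, k₁, k₂, rfl, hk, h₁, h₂⟩ := ih h
        exact ⟨x :: a₁, a₂, _, k₂, rfl, by omega, substitute x y h₁, h₂⟩

end EditAlignment

theorem editAlignment_ed : ∀ a b : List α, EditAlignment a b (ed a b)
  | [], [] => by simpa using EditAlignment.nil
  | [], y :: b => by rw [ed_nil_cons]; exact .insert y (editAlignment_ed [] b)
  | x :: a, [] => by rw [ed_cons_nil]; exact .delete x (editAlignment_ed a [])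
  | x :: a, y :: b => by
    rw [ed_cons_cons]
    rcases min_choice (ed a (y :: b) + 1)
        (min (ed (x :: a) b + 1) (ed a b + if x = y then 0 else 1)) with h | h <;> rw [h]
    · exact .delete x (editAlignment_ed a (y :: b))
    rcases min_choice (ed (x :: a) b + 1) (ed a b + if x = y then 0 else 1) with h | h <;> rw [h]
    · exact .insert y (editAlignment_ed (x :: a) b)
    · exact .substitute x y (editAlignment_ed a b)

theorem ed_comm (a b : List α) : ed a b = ed b a :=
  le_antisymm (editAlignment_ed b a).symm.ed_le (editAlignment_ed a b).symm.ed_le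

theorem length_le_length_add_ed (a b : List α) : b.length ≤ a.length + ed a b :=
  (editAlignment_ed a b).length_le

theorem ed_triangle (a b c : List α) : ed a c ≤ ed a b + ed b c := by
  obtain ⟨m, hm, h⟩ := (editAlignment_ed a b).trans (editAlignment_ed b c)
  exact h.ed_le.trans hm

theorem ed_append_le (a a' b b' : List α) : ed (a ++ a') (b ++ b') ≤ ed a b + ed a' b' :=
  ((editAlignment_ed a b).append (editAlignment_ed a' b')).ed_le

theorem ed_self (a : List α) : ed a a = 0 :=
  Nat.le_zero.1 (EditAlignment.refl a).ed_le

theorem ed_nil_left_le (b : List α) : ed [] b ≤ b.length :=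
  (EditAlignment.nil_left b).ed_le

theorem List.IsInfix.ed_le {a b : List α} (h : a <:+: b) : ed a b ≤ b.length - a.length := by
  obtain ⟨e₁, e₂, rfl⟩ := h
  calc ed a (e₁ ++ a ++ e₂) = ed ([] ++ a ++ []) (e₁ ++ a ++ e₂) := by simp
    _ ≤ ed [] e₁ + ed a a + ed [] e₂ :=
      (ed_append_le _ _ _ _).trans (by gcongr; exact ed_append_le _ _ _ _)
    _ ≤ (e₁ ++ a ++ e₂).length - a.length := by
      have := ed_nil_left_le e₁
      have := ed_nil_left_le e₂
      simp only [ed_self, List.length_append]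
      omega

theorem exists_append_eq_ed_add_ed_le (a b b' : List α) :
    ∃ a₁ a₂, a = a₁ ++ a₂ ∧ ed a₁ b + ed a₂ b' ≤ ed a (b ++ b') := by
  obtain ⟨a₁, a₂, k₁, k₂, rfl, hk, h₁, h₂⟩ := (editAlignment_ed a (b ++ b')).split
  exact ⟨a₁, a₂, rfl, by have := h₁.ed_le; have := h₂.ed_le; omega⟩

theorem List.IsInfix.exists_infix_ed_le {b b' : List α} (h : b <:+: b') (a' : List α) :
    ∃ a, a <:+: a' ∧ ed a b ≤ ed a' b' := by
  obtain ⟨e₁, e₂, rfl⟩ := h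
  obtain ⟨a₁, a₂, rfl, h₁⟩ := exists_append_eq_ed_add_ed_le a' e₁ (b ++ e₂)
  obtain ⟨a, a₃, rfl, h₂⟩ := exists_append_eq_ed_add_ed_le a₂ b e₂
  exact ⟨a, List.infix_append' a₁ a a₃, by rw [List.append_assoc]; omega⟩

section Window

variable {a c w : List α}

omit [DecidableEq α] in
theorem List.IsInfix.exists_infix_length_eq (h : c <:+: w) {L : ℕ} (hL : L ≤ w.length) :
    ∃ c', c' <:+: w ∧ c'.length = L ∧ (c' <:+: c ∨ c <:+: c') := by
  by_cases hc : L ≤ c.length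
  · exact ⟨c.take L, (c.take_prefix L).isInfix.trans h, by simp [hc],
      .inl (c.take_prefix L).isInfix⟩
  obtain ⟨P, S, rfl⟩ := h
  simp only [List.length_append] at hL
  by_cases hS : L ≤ c.length + S.length
  · refine ⟨c ++ S.take (L - c.length), ⟨P, S.drop (L - c.length), ?_⟩, by simp; omega,
      .inr (List.prefix_append c _).isInfix⟩
    simp [List.append_assoc]
  · set d := P.length - (L - c.length - S.length)
    refine ⟨P.drop d ++ c ++ S, ⟨P.take d, [], ?_⟩, by simp; omega,
      .inr (List.infix_append _ c S)⟩
    simp [← List.append_assoc]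

theorem List.IsInfix.exists_infix_length_eq_ed_le (h : c <:+: w) (ha : a.length ≤ w.length) :
    ∃ c', c' <:+: w ∧ c'.length = a.length ∧ ed a c' ≤ 2 * ed a c := by
  obtain ⟨c', hc'w, hc'a, hcc'⟩ := h.exists_infix_length_eq ha
  have hcc' : ed c c' ≤ ed a c := by
    have := length_le_length_add_ed a c
    have := length_le_length_add_ed c a
    rw [ed_comm c a] at this
    rcases hcc' with hcc' | hcc'
    · have := hcc'.ed_le; rw [ed_comm]; omega
    · have := hcc'.ed_le; omega
  exact ⟨c', hc'w, hc'a, by have := ed_triangle a c c'; omega⟩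

end Window

theorem exists_close_infixes_of_common_infix {A C Y u v : List α} {B : ℕ}
    (hYu : Y <:+: u) (hYv : Y <:+: v) (hA : B + ed A u ≤ Y.length) (hC : B ≤ C.length) :
    ∃ a c, a <:+: A ∧ c <:+: C ∧ a.length = B ∧ c.length = B ∧
      ed a c ≤ 2 * (ed A u + ed C v) := by
  obtain ⟨a₀, ha₀, hYa₀⟩ := hYu.exists_infix_ed_le A
  obtain ⟨c₀, hc₀, hYc₀⟩ := hYv.exists_infix_ed_le C
  have ha₀c₀ : ed a₀ c₀ ≤ ed A u + ed C v := by
    have := ed_triangle a₀ Y c₀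
    rw [ed_comm Y c₀] at this
    omega
  have hB : B ≤ a₀.length := by have := length_le_length_add_ed a₀ Y; omega
  have ha : (a₀.take B).length = B := by simp [hB]
  obtain ⟨c₁, hc₁, hac₁⟩ := (a₀.take_prefix B).isInfix.exists_infix_ed_le c₀
  obtain ⟨c, hc, hcB, hac⟩ := (hc₁.trans hc₀).exists_infix_length_eq_ed_le (a := a₀.take B)
    (by omega)
  refine ⟨a₀.take B, c, (a₀.take_prefix B).isInfix.trans ha₀, hc, ha, hcB.trans ha, ?_⟩
  rw [ed_comm c₁, ed_comm c₀] at hac₁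
  omega

section Positions

variable {w x : List α}

omit [DecidableEq α]

theorem List.IsInfix.exists_sub_eq (h : w <:+: x) :
    ∃ s, s + w.length ≤ x.length ∧ sub x w.length s = w := by
  obtain ⟨P, S, rfl⟩ := h
  exact ⟨P.length, by simp, by simp [sub]⟩

theorem sub_sub_of_add_le (x : List α) {L B s : ℕ} (a : ℕ) (h : s + B ≤ L) :
    sub (sub x L a) B s = sub x B (a + s) := by
  simp only [sub, List.drop_take, List.take_take, List.drop_drop]
  congr 1
  omega

theorem length_sub_le (x : List α) (L a : ℕ) : (sub x L a).length ≤ L := by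
  simp [sub]

theorem List.IsInfix.exists_sub_eq_of_infix_sub {L a : ℕ} (h : w <:+: sub x L a) :
    ∃ s, a ≤ s ∧ s + w.length ≤ a + L ∧ sub x w.length s = w := by
  obtain ⟨s, hs, hw⟩ := h.exists_sub_eq
  have := length_sub_le x L a
  exact ⟨a + s, by omega, by omega, (sub_sub_of_add_le x a (by omega)).symm.trans hw⟩

end Positions

theorem exists_close_sub_outside_block (x Y u v : List α) {B L i j : ℕ} (hij : i ≠ j)
    (hBL : B ≤ L) (hj : L * (j + 1) ≤ x.length) (hYu : Y <:+: u) (hYv : Y <:+: v)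
    (hi : B + ed (sub x L (L * i)) u ≤ Y.length) :
    ∃ s t, L * i ≤ s ∧ s + B ≤ L * (i + 1) ∧ t + B ≤ x.length ∧
      (t + B ≤ L * i ∨ L * (i + 1) ≤ t) ∧
      ed (sub x B s) (sub x B t) ≤ 2 * (ed (sub x L (L * i)) u + ed (sub x L (L * j)) v) := by
  rw [Nat.mul_add_one] at hj ⊢
  have hCj : (sub x L (L * j)).length = L := by
    simp only [sub, List.length_take, List.length_drop]; omega
  obtain ⟨a, c, ha, hc, haB, hcB, hac⟩ :=
    exists_close_infixes_of_common_infix hYu hYv hi (hCj ▸ hBL)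
  obtain ⟨s, hs, hsB, rfl⟩ := haB ▸ ha.exists_sub_eq_of_infix_sub
  obtain ⟨t, ht, htB, rfl⟩ := hcB ▸ hc.exists_sub_eq_of_infix_sub
  have hdisj : t + B ≤ L * i ∨ L * i + L ≤ t := by
    rcases hij.lt_or_gt with hij | hij
    · have := Nat.mul_le_mul_left L hij; rw [Nat.mul_add_one] at this; omega
    · have := Nat.mul_le_mul_left L hij; rw [Nat.mul_add_one] at this; omega
  exact ⟨s, t, hs, by omega, by omega, hdisj, hac⟩

end

theorem both_match_not_unique_general {α : Type*} [DecidableEq α]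
    (p : ℝ) (B n : ℕ) (hp1 : p < 1)
    (x y : List α) (hx : x.length = n) (hy : y.length = n)
    (i j k : ℕ) (hij : i ≠ j)
    (hi : i < n / (6 * B)) (hj : j < n / (6 * B)) (hk : k < n / (3 * B))
    (hui : ∃ u : List α, u <:+: y ∧ u.length = 6 * B ∧
      sub y (3 * B) (3 * B * k) <:+: u ∧
      (ed (sub x (6 * B) (6 * B * i)) u : ℝ) ≤ p * B / 8)
    (huj : ∃ v : List α, v <:+: y ∧ v.length = 6 * B ∧
      sub y (3 * B) (3 * B * k) <:+: v ∧
      (ed (sub x (6 * B) (6 * B * j)) v : ℝ) ≤ p * B / 8) :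
    (∃ s t : ℕ, 6 * B * i ≤ s ∧ s + B ≤ 6 * B * (i + 1) ∧ t + B ≤ n ∧
      (t + B ≤ 6 * B * i ∨ 6 * B * (i + 1) ≤ t) ∧
      (ed (sub x B s) (sub x B t) : ℝ) ≤ p * B / 2) ∧
    (∃ s t : ℕ, 6 * B * j ≤ s ∧ s + B ≤ 6 * B * (j + 1) ∧ t + B ≤ n ∧
      (t + B ≤ 6 * B * j ∨ 6 * B * (j + 1) ≤ t) ∧
      (ed (sub x B s) (sub x B t) : ℝ) ≤ p * B / 2) := by
  subst hx
  obtain ⟨u, -, -, hYu, hu⟩ := hui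
  obtain ⟨v, -, -, hYv, hv⟩ := huj
  have hblock {l : ℕ} (hl : l < x.length / (6 * B)) : 6 * B * (l + 1) ≤ x.length := by
    rw [mul_comm]; exact Nat.mul_le_of_le_div _ _ _ hl
  have hY : B + 2 * B ≤ (sub y (3 * B) (3 * B * k)).length := by
    have := Nat.mul_le_of_le_div _ _ _ hk
    rw [Nat.add_one_mul, mul_comm k] at this
    simp only [sub, List.length_take, List.length_drop]
    omega
  have hp : p * B ≤ B := mul_le_of_le_one_left (Nat.cast_nonneg B) hp1.le
  have hclose {e : ℕ} (he : (e : ℝ) ≤ p * B / 8) : B + e ≤ (sub y (3 * B) (3 * B * k)).length :=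
    le_trans (by gcongr; exact_mod_cast (by linarith : (e : ℝ) ≤ 2 * B)) hY
  have hfar {d e e' : ℕ} (he : (e : ℝ) ≤ p * B / 8) (he' : (e' : ℝ) ≤ p * B / 8)
      (hd : d ≤ 2 * (e + e')) : (d : ℝ) ≤ p * B / 2 :=
    (Nat.cast_le.2 hd).trans (by push_cast; linarith)
  constructor
  · obtain ⟨s, t, h₁, h₂, h₃, h₄, h₅⟩ := exists_close_sub_outside_block x _ u v hij
      (by omega) (hblock hj) hYu hYv (hclose hu)
    exact ⟨s, t, h₁, h₂, h₃, h₄, hfar hu hv h₅⟩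
  · obtain ⟨s, t, h₁, h₂, h₃, h₄, h₅⟩ := exists_close_sub_outside_block x _ v u hij.symm
      (by omega) (hblock hi) hYv hYu (hclose hv)
    exact ⟨s, t, h₁, h₂, h₃, h₄, hfar hv hu h₅⟩

/-- **Lemma 3.4.**  Let `x, y ∈ Σⁿ` with `6B ∣ n`; break `x` into blocks of length `6B`
and `y` into blocks of length `3B`.  If two distinct blocks `x^i` and `x^j` both
partially edit match with the same block `y^k` — i.e. each is within `pB/8` edits of a
`6B`-letter substring of `y` containing `y^k` — then neither `x^i` nor `x^j` is
`p`-unique: each contains a `B`-letter substring within `pB/2` edits of some `B`-letter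
substring of `x` disjoint from that block. -/
theorem both_match_not_unique {α : Type*} [DecidableEq α]
    (p : ℝ) (B n : ℕ) (hp0 : 0 < p) (hp1 : p < 1) (hB : 0 < B)
    (hpB : ∃ m : ℕ, (m : ℝ) = p * B)
    (x y : List α) (hx : x.length = n) (hy : y.length = n) (hn : 6 * B ∣ n)
    (i j k : ℕ) (hij : i ≠ j)
    (hi : i < n / (6 * B)) (hj : j < n / (6 * B)) (hk : k < n / (3 * B))
    (hui : ∃ u : List α, u <:+: y ∧ u.length = 6 * B ∧
      sub y (3 * B) (3 * B * k) <:+: u ∧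
      (ed (sub x (6 * B) (6 * B * i)) u : ℝ) ≤ p * B / 8)
    (huj : ∃ v : List α, v <:+: y ∧ v.length = 6 * B ∧
      sub y (3 * B) (3 * B * k) <:+: v ∧
      (ed (sub x (6 * B) (6 * B * j)) v : ℝ) ≤ p * B / 8) :
    (∃ s t : ℕ, 6 * B * i ≤ s ∧ s + B ≤ 6 * B * (i + 1) ∧ t + B ≤ n ∧
      (t + B ≤ 6 * B * i ∨ 6 * B * (i + 1) ≤ t) ∧
      (ed (sub x B s) (sub x B t) : ℝ) ≤ p * B / 2) ∧
    (∃ s t : ℕ, 6 * B * j ≤ s ∧ s + B ≤ 6 * B * (j + 1) ∧ t + B ≤ n ∧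
      (t + B ≤ 6 * B * j ∨ 6 * B * (j + 1) ≤ t) ∧
      (ed (sub x B s) (sub x B t) : ℝ) ≤ p * B / 2) :=
  both_match_not_unique_general p B n hp1 x y hx hy i j k hij hi hj hk hui huj
end
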